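/- arXiv:1311.7462 — 3 statements merged into one kernel-verified Lean document; each statement's English description precedes it below -/
import Mathlib

section
/- Let A and B be real symmetric 4×4 matrices, λ₀ ∈ ℝ, and set M = λ₀A − B. Suppose X₀, X₁ ∈ ℝ⁴ satisfy M X₀ = 0 and M X₁ = A X₀ (i.e., X₀ is an eigenvector and X₁ a generalized eigenvector of the pencil associated with the multiple root λ₀). Then X₀^T A X₀ = 0 and X₀^T B X₀ = 0; that is, the point X₀ lies on both quadrics X^T A X = 0 and X^T B X = 0. -/
open Matrix

/-- Case 1 of the contact-configuration lemma: if `X₀` is an eigenvector and `X₁` a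
generalized eigenvector of the pencil associated with `λ₀` (i.e. `(λ₀A − B)X₀ = 0` and
`(λ₀A − B)X₁ = AX₀`), then the point `X₀` lies on both quadrics. -/
theorem eigenvector_on_both_quadrics
    (A B : Matrix (Fin 4) (Fin 4) ℝ) (hA : A.IsSymm) (hB : B.IsSymm)
    (lam₀ : ℝ) (X₀ X₁ : Fin 4 → ℝ)
    (h₀ : (lam₀ • A - B) *ᵥ X₀ = 0)
    (h₁ : (lam₀ • A - B) *ᵥ X₁ = A *ᵥ X₀) :
    X₀ ⬝ᵥ A *ᵥ X₀ = 0 ∧ X₀ ⬝ᵥ B *ᵥ X₀ = 0 := by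
  have hM : (lam₀ • A - B).IsSymm := by
    unfold Matrix.IsSymm at *
    rw [transpose_sub, transpose_smul, hA, hB]
  have hA0 : X₀ ⬝ᵥ A *ᵥ X₀ = 0 := by
    calc X₀ ⬝ᵥ A *ᵥ X₀ = X₀ ⬝ᵥ (lam₀ • A - B) *ᵥ X₁ := by rw [h₁]
    _ = ((lam₀ • A - B) *ᵥ X₀) ⬝ᵥ X₁ := by
        rw [dotProduct_mulVec, 
          show X₀ ᵥ* (lam₀ • A - B) = (lam₀ • A - B) *ᵥ X₀ by
            rw [← hM.eq, vecMul_transpose, hM.eq]]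
    _ = 0 := by rw [h₀, zero_dotProduct]
  refine ⟨hA0, ?_⟩
  have := congrArg (fun v => X₀ ⬝ᵥ v) h₀
  simp only [sub_mulVec, smul_mulVec, dotProduct_sub, dotProduct_smul, dotProduct_zero,
    smul_eq_mul, hA0, mul_zero, zero_sub, neg_eq_zero] at this
  exact this
end

section
/- Let Â and B̂ be real symmetric 2×2 matrices. Suppose there exists a nonzero vector U₀ ∈ ℝ² with U₀^T Â U₀ = 0 and U₀^T B̂ U₀ = 0 (a common real point of the two 1D conics). Then there exist real numbers a, c such that det(λÂ − μB̂) = −(aλ − cμ)² for all λ, μ ∈ ℝ; in particular, the binary quadratic form F(λ, μ) = det(λÂ − μB̂) is the negative of a perfect square of a real linear form, so the characteristic polynomial f(λ) = det(λÂ − B̂) either has a double root or is identically zero. -/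
open Matrix

/-- If two 1D conics (real symmetric `2×2` matrices) have a common real point
(a nonzero vector `U₀` annihilated by both quadratic forms), then the binary form
`F(λ, μ) = det(λÂ − μB̂)` is the negative of a perfect square of a real linear form:
`det(λÂ − μB̂) = −(aλ − cμ)²` for some reals `a, c`. -/
theorem common_point_1D_conics_det_is_neg_square
    (Ahat Bhat : Matrix (Fin 2) (Fin 2) ℝ) (hA : Ahat.IsSymm) (hB : Bhat.IsSymm)
    (U₀ : Fin 2 → ℝ) (hU₀ : U₀ ≠ 0)
    (hUA : U₀ ⬝ᵥ Ahat *ᵥ U₀ = 0) (hUB : U₀ ⬝ᵥ Bhat *ᵥ U₀ = 0) :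
    ∃ a c : ℝ, ∀ lam μ : ℝ,
      (lam • Ahat - μ • Bhat).det = -(a * lam - c * μ) ^ 2 := by
  set u := U₀ 0 with hu
  set w := U₀ 1 with hw
  have hs : u ^ 2 + w ^ 2 ≠ 0 := by
    intro h
    apply hU₀
    have hu0 : u = 0 := by nlinarith [sq_nonneg u, sq_nonneg w]
    have hw0 : w = 0 := by nlinarith [sq_nonneg u, sq_nonneg w]
    funext i
    fin_cases i <;> simpa using (by assumption : _)
  have hA10 : Ahat 1 0 = Ahat 0 1 := hA.apply 0 1
  have hB10 : Bhat 1 0 = Bhat 0 1 := hB.apply 0 1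
  have hUA' : Ahat 0 0 * u ^ 2 + 2 * Ahat 0 1 * u * w + Ahat 1 1 * w ^ 2 = 0 := by
    have := hUA
    simp [dotProduct, mulVec, Fin.sum_univ_two, hA10] at this
    linarith [this]
  have hUB' : Bhat 0 0 * u ^ 2 + 2 * Bhat 0 1 * u * w + Bhat 1 1 * w ^ 2 = 0 := by
    have := hUB
    simp [dotProduct, mulVec, Fin.sum_univ_two, hB10] at this
    linarith [this]
  refine ⟨(-Ahat 0 0 * u * w + Ahat 0 1 * (u ^ 2 - w ^ 2) + Ahat 1 1 * u * w) / (u ^ 2 + w ^ 2),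
    (-Bhat 0 0 * u * w + Bhat 0 1 * (u ^ 2 - w ^ 2) + Bhat 1 1 * u * w) / (u ^ 2 + w ^ 2),
    fun lam μ => ?_⟩
  rw [Matrix.det_fin_two]
  simp only [Matrix.sub_apply, Matrix.smul_apply, smul_eq_mul, hA10, hB10]
  field_simp
  linear_combination (((lam * Ahat 1 1 - μ * Bhat 1 1) * u ^ 2
      - 2 * (lam * Ahat 0 1 - μ * Bhat 0 1) * u * w
      + (lam * Ahat 0 0 - μ * Bhat 0 0) * w ^ 2) * lam) * hUA'
    - (((lam * Ahat 1 1 - μ * Bhat 1 1) * u ^ 2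
      - 2 * (lam * Ahat 0 1 - μ * Bhat 0 1) * u * w
      + (lam * Ahat 0 0 - μ * Bhat 0 0) * w ^ 2) * μ) * hUB'
end

section
/- Let q_A and q_B be the quadratic forms of real symmetric 4×4 matrices A and B on homogeneous coordinates of ℝ³, and let 𝒜 and ℬ be the conics obtained by intersecting the quadrics q_A = 0 and q_B = 0 with planes Π_A and Π_B in ℝ³, respectively. Suppose the intersection Π_A ∩ Π_B is exactly the line {P + uQ : u ∈ ℝ} for some P ∈ ℝ³ and nonzero Q ∈ ℝ³, and define the 2×2 real symmetric matrices Â, B̂ by h(u) = q_A(P + uQ) = (u,1) Â (u,1)^T and g(u) = q_B(P + uQ) = (u,1) B̂ (u,1)^T. If the conics 𝒜 and ℬ have a common point X* ∈ ℝ³, then the binary form F(λ, μ) = det(λÂ − μB̂) equals −(aλ − cμ)² for some a, c ∈ ℝ; in particular the characteristic polynomial f(λ) = det(λÂ − B̂) has a double root or is identically zero. -/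
open Matrix

/-- Homogeneous coordinates of a point of `ℝ³`. -/
def homog (X : Fin 3 → ℝ) : Fin 4 → ℝ := ![X 0, X 1, X 2, 1]

/-- Necessity direction of the contact condition for two conics in `ℝ³`:
let the conics `𝒜 = {X ∈ Π_A : q_A X = 0}` and `ℬ = {X ∈ Π_B : q_B X = 0}` be the
sections of two quadrics by planes whose intersection is the line `{P + uQ}`, and let
`Â, B̂` be the `2×2` symmetric matrices of the restricted quadratics
`h(u) = q_A(P + uQ)` and `g(u) = q_B(P + uQ)`.  If the conics have a common point `X*`,
then `det(λÂ − μB̂) = −(aλ − cμ)²` for some reals `a, c`; in particular the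
characteristic polynomial `det(λÂ − B̂)` has a double root or is identically zero. -/
theorem conics_in_3D_contact_implies_det_neg_square
    (A B : Matrix (Fin 4) (Fin 4) ℝ) (hA : A.IsSymm) (hB : B.IsSymm)
    (PiA PiB : Set (Fin 3 → ℝ))
    (P Q : Fin 3 → ℝ) (hQ : Q ≠ 0)
    (hline : PiA ∩ PiB = {X : Fin 3 → ℝ | ∃ u : ℝ, X = P + u • Q})
    (Ahat Bhat : Matrix (Fin 2) (Fin 2) ℝ) (hAhat : Ahat.IsSymm) (hBhat : Bhat.IsSymm)
    (hh : ∀ u : ℝ, homog (P + u • Q) ⬝ᵥ A *ᵥ homog (P + u • Q) =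
            ![u, 1] ⬝ᵥ Ahat *ᵥ ![u, 1])
    (hg : ∀ u : ℝ, homog (P + u • Q) ⬝ᵥ B *ᵥ homog (P + u • Q) =
            ![u, 1] ⬝ᵥ Bhat *ᵥ ![u, 1])
    (Xstar : Fin 3 → ℝ)
    (hXA : Xstar ∈ PiA) (hXB : Xstar ∈ PiB)
    (hqA : homog Xstar ⬝ᵥ A *ᵥ homog Xstar = 0)
    (hqB : homog Xstar ⬝ᵥ B *ᵥ homog Xstar = 0) :
    ∃ a c : ℝ, ∀ lam μ : ℝ,
      (lam • Ahat - μ • Bhat).det = -(a * lam - c * μ) ^ 2 := by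
  have hx : Xstar ∈ PiA ∩ PiB := ⟨hXA, hXB⟩
  rw [hline] at hx
  obtain ⟨u, hu⟩ := hx
  subst hu
  have hA0 : ![u, 1] ⬝ᵥ Ahat *ᵥ ![u, 1] = 0 := by rw [← hh u]; exact hqA
  have hB0 : ![u, 1] ⬝ᵥ Bhat *ᵥ ![u, 1] = 0 := by rw [← hg u]; exact hqB
  have hAs : Ahat 1 0 = Ahat 0 1 := by
    conv_lhs => rw [← hAhat]
    simp [Matrix.transpose_apply]
  have hBs : Bhat 1 0 = Bhat 0 1 := by
    conv_lhs => rw [← hBhat]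
    simp [Matrix.transpose_apply]
  simp [dotProduct, Matrix.mulVec, Fin.sum_univ_two, hAs] at hA0
  simp [dotProduct, Matrix.mulVec, Fin.sum_univ_two, hBs] at hB0
  refine ⟨Ahat 0 0 * u + Ahat 0 1, Bhat 0 0 * u + Bhat 0 1, fun lam μ => ?_⟩
  rw [Matrix.det_fin_two]
  simp only [Matrix.sub_apply, Matrix.smul_apply, smul_eq_mul, hAs, hBs]
  linear_combination ((lam * Ahat 0 0 - μ * Bhat 0 0) * lam) * hA0 - ((lam * Ahat 0 0 - μ * Bhat 0 0) * μ) * hB0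
end
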